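/- arXiv:1109.2345 — 3 statements merged into one kernel-verified Lean document; each statement's English description precedes it below -/
import Mathlib

section
/- For $1<\alpha<2$, the sequence $q_m = (m+2)^{3-\alpha} - 4(m+1)^{3-\alpha} + 6 m^{3-\alpha} - 4(m-1)^{3-\alpha} + (m-2)^{3-\alpha}$, defined for integers $m \geq 2$, is nonincreasing: $q_{m+1} \leq q_m$ for all $m \geq 2$. -/
/-!
With `f x = x ^ (3 - α)` and `Δ` the forward difference of step `1`, `q m = Δ⁴ f (m - 2)`, so
`q (m + 1) - q m = Δ⁵ f (m - 2)`. Since `Δⁿ f` has derivative `Δⁿ f'`, a sign of `f⁽ⁿ⁾` on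
`(0, ∞)` passes to `Δⁿ f` by induction on `n`, each step being the monotonicity of `Δⁿ⁻¹ f`.
Here `f⁽⁵⁾ x = p (p - 1) (p - 2) (p - 3) (p - 4) x ^ (p - 5) ≤ 0` for `p = 3 - α ∈ (1, 2)`,
and the endpoint `m = 2` follows by continuity of `f` at `0`.
-/

open Set Function fwdDiff

theorem Continuous.fwdDiff_iter {M G : Type*} [AddCommMonoid M] [TopologicalSpace M]
    [ContinuousAdd M] [AddCommGroup G] [TopologicalSpace G] [IsTopologicalAddGroup G] {f : M → G}
    (hf : Continuous f) (h : M) (n : ℕ) : Continuous ((Δ_[h])^[n] f) := by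
  induction n with
  | zero => exact hf
  | succ n ih =>
    rw [iterate_succ']
    exact (ih.comp (continuous_add_const h)).sub ih

theorem fwdDiff_iter_four_sub_two (f : ℝ → ℝ) (x : ℝ) :
    (Δ_[1])^[4] f (x - 2) = f (x + 2) - 4 * f (x + 1) + 6 * f x - 4 * f (x - 1) + f (x - 2) := by
  simp only [iterate_succ_apply', iterate_zero_apply, fwdDiff]
  ring_nf

section Derivative

variable {f f' : ℝ → ℝ} {a h : ℝ}

theorem hasDerivAt_fwdDiff_iter (hh : 0 ≤ h) (hf : ∀ x > a, HasDerivAt f (f' x) x) (n : ℕ) :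
    ∀ x > a, HasDerivAt ((Δ_[h])^[n] f) ((Δ_[h])^[n] f' x) x := by
  induction n generalizing f f' with
  | zero => simpa using hf
  | succ n ih =>
    simp only [iterate_succ_apply]
    exact ih fun x hx => ((hf (x + h) (by linarith)).comp_add_const x h).sub (hf x hx)

theorem fwdDiff_iter_succ_nonpos (hh : 0 ≤ h) (hf : ∀ x > a, HasDerivAt f (f' x) x) {n : ℕ}
    (hf' : ∀ x > a, (Δ_[h])^[n] f' x ≤ 0) : ∀ x > a, (Δ_[h])^[n + 1] f x ≤ 0 := by
  have hderiv := hasDerivAt_fwdDiff_iter hh hf n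
  have hanti : AntitoneOn ((Δ_[h])^[n] f) (Ioi a) := by
    refine antitoneOn_of_hasDerivWithinAt_nonpos (f' := (Δ_[h])^[n] f') (convex_Ioi a)
      (fun x hx => (hderiv x hx).continuousAt.continuousWithinAt) ?_ ?_ <;> rw [interior_Ioi]
    exacts [fun x hx => (hderiv x hx).hasDerivWithinAt, hf']
  intro x hx
  rw [iterate_succ_apply']
  exact sub_nonpos.2 (hanti hx (mem_Ioi.2 (by linarith)) (by linarith))

theorem fwdDiff_iter_nonpos_of_iterate_deriv_nonpos (hh : 0 ≤ h) {n : ℕ}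
    (hf : ContDiffOn ℝ n f (Ioi a)) (hfn : ∀ x > a, deriv^[n] f x ≤ 0) :
    ∀ x > a, (Δ_[h])^[n] f x ≤ 0 := by
  induction n generalizing f with
  | zero => simpa using hfn
  | succ n ih =>
    have hdf : ContDiffOn ℝ n (deriv f) (Ioi a) := hf.deriv_of_isOpen isOpen_Ioi (by simp)
    refine fwdDiff_iter_succ_nonpos hh (fun x hx => ?_) (ih hdf hfn)
    exact ((hf.differentiableOn (by simp) x hx).differentiableAt (Ioi_mem_nhds hx)).hasDerivAt

end Derivative

theorem fwdDiff_iter_rpow_nonpos {p h : ℝ} {n : ℕ} (hp : 0 ≤ p) (hh : 0 ≤ h)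
    (hpn : (descPochhammer ℝ n).eval p ≤ 0) :
    ∀ x ≥ 0, (Δ_[h])^[n] (fun x : ℝ => x ^ p) x ≤ 0 := by
  have hpos : Ioi 0 ⊆ {x | (Δ_[h])^[n] (fun x : ℝ => x ^ p) x ≤ 0} := fun x hx => by
    refine fwdDiff_iter_nonpos_of_iterate_deriv_nonpos hh
      (fun y hy => (Real.contDiffAt_rpow_const_of_ne (ne_of_gt hy)).contDiffWithinAt)
      (fun y hy => ?_) x hx
    rw [Real.iter_deriv_rpow_const]
    exact mul_nonpos_of_nonpos_of_nonneg hpn (Real.rpow_nonneg hy.le _)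
  have hclosed := isClosed_le (g := fun _ => (0 : ℝ))
    ((Real.continuous_rpow_const hp).fwdDiff_iter h n) continuous_const
  exact fun x hx => hclosed.closure_subset_iff.2 hpos (by rwa [closure_Ioi])

theorem descPochhammer_five_eval_nonpos {p : ℝ} (h1 : 1 ≤ p) (h2 : p ≤ 2) :
    (descPochhammer ℝ 5).eval p ≤ 0 := by
  have hfactor : (descPochhammer ℝ 5).eval p = p * (p - 1) * ((p - 2) * (p - 3)) * (p - 4) := by
    simp only [descPochhammer_succ_right, descPochhammer_zero, Polynomial.eval_mul,
      Polynomial.eval_sub, Polynomial.eval_X, Polynomial.eval_natCast, Polynomial.eval_one]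
    push_cast
    ring
  rw [hfactor]
  refine mul_nonpos_of_nonneg_of_nonpos (mul_nonneg (mul_nonneg ?_ ?_)
    (mul_nonneg_of_nonpos_of_nonpos ?_ ?_)) ?_ <;> linarith

theorem q_antitone (α : ℝ) (h1 : 1 < α) (h2 : α < 2)
    (q : ℕ → ℝ)
    (hq : ∀ m : ℕ, q m = ((m : ℝ) + 2) ^ (3 - α) - 4 * ((m : ℝ) + 1) ^ (3 - α)
        + 6 * (m : ℝ) ^ (3 - α) - 4 * ((m : ℝ) - 1) ^ (3 - α) + ((m : ℝ) - 2) ^ (3 - α)) :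
    ∀ m : ℕ, 2 ≤ m → q (m + 1) ≤ q m := by
  intro m hm
  set f : ℝ → ℝ := fun x => x ^ (3 - α)
  have hq4 (k : ℕ) : q k = (Δ_[1])^[4] f (k - 2) := by rw [hq, fwdDiff_iter_four_sub_two]
  have h5 := fwdDiff_iter_rpow_nonpos (p := 3 - α) (by linarith) zero_le_one
    (descPochhammer_five_eval_nonpos (by linarith) (by linarith)) ((m : ℝ) - 2)
    (sub_nonneg.2 (by exact_mod_cast hm))
  rw [iterate_succ_apply', fwdDiff] at h5
  have hshift : ((m + 1 : ℕ) : ℝ) - 2 = (m : ℝ) - 2 + 1 := by push_cast; ring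
  rw [hq4, hq4, hshift]
  linarith
end

section
/- For $1<\alpha<2$, define $q_{-1} = 1$, $q_0 = 2^{3-\alpha} - 4$, $q_1 = 3^{3-\alpha} - 4\cdot 2^{3-\alpha} + 6$, and for $m \geq 2$, $q_m = (m+2)^{3-\alpha} - 4(m+1)^{3-\alpha} + 6 m^{3-\alpha} - 4(m-1)^{3-\alpha} + (m-2)^{3-\alpha}$. Then $\sum_{m=-1}^{\infty} q_m = 0$. -/
/-!
Put `p = 3 - α ∈ (1, 2)` and `D x = (x + 2) ^ p - 2 (x + 1) ^ p + x ^ p`. For `m ≥ 2`, `q_m` is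
the second difference of `D` at `m - 2`, so the tail of the series telescopes to `-(D 1 - D 0)`,
which cancels `q_{-1} + q_0 + q_1 = D 1 - D 0`, provided the third differences `D (k + 1) - D k`
tend to zero. They do, because `0 ≤ D x ≤ 2 p (p - 1) x ^ (p - 2)` by convexity of `x ^ p` and
concavity of `x ^ (p - 1)`. Unconditional convergence comes from the tail terms being nonnegative:
`D` is convex, as `D''` is `p (p - 1)` times the second difference of the convex `x ^ (p - 2)`.
-/

/-- `Q n` is the coefficient `q_{n-1}` of the spline discretization of the
Riemann-Liouville derivative, indexed so that `Q 0 = q_{-1}`. -/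
noncomputable def Q (α : ℝ) : ℕ → ℝ
  | 0 => 1
  | 1 => (2 : ℝ) ^ (3 - α) - 4
  | 2 => (3 : ℝ) ^ (3 - α) - 4 * (2 : ℝ) ^ (3 - α) + 6
  | (n + 3) =>
      (((n : ℝ) + 2) + 2) ^ (3 - α) - 4 * (((n : ℝ) + 2) + 1) ^ (3 - α)
        + 6 * ((n : ℝ) + 2) ^ (3 - α) - 4 * (((n : ℝ) + 2) - 1) ^ (3 - α)
        + (((n : ℝ) + 2) - 2) ^ (3 - α)

open Set Filter Topology

def secondDiff (g : ℝ → ℝ) (x : ℝ) : ℝ := g (x + 2) - 2 * g (x + 1) + g x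

section SecondDiff

variable {g : ℝ → ℝ} {s : Set ℝ} {x : ℝ}

lemma ConvexOn.secondDiff_nonneg (hg : ConvexOn ℝ s g) (hx : x ∈ s) (hx2 : x + 2 ∈ s) :
    0 ≤ secondDiff g x := by
  have hmid := hg.2 hx hx2 (by norm_num : (0 : ℝ) ≤ 1 / 2) (by norm_num : (0 : ℝ) ≤ 1 / 2)
    (by norm_num)
  simp only [smul_eq_mul] at hmid
  rw [show 1 / 2 * x + 1 / 2 * (x + 2) = x + 1 by ring] at hmid
  unfold secondDiff
  linarith

lemma ConvexOn.secondDiff_le (hg : ConvexOn ℝ s g) (hx : x ∈ s) (hx2 : x + 2 ∈ s) {a b : ℝ}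
    (ha : HasDerivAt g a x) (hb : HasDerivAt g b (x + 2)) :
    secondDiff g x ≤ b - a := by
  have hx1 : x + 1 ∈ s := hg.1.ordConnected.out hx hx2 ⟨by linarith, by linarith⟩
  have hleft := hg.le_slope_of_hasDerivAt hx hx1 (by linarith) ha
  have hright := hg.slope_le_of_hasDerivAt hx1 hx2 (by linarith) hb
  rw [slope_def_field] at hleft hright
  norm_num at hleft hright
  unfold secondDiff
  linarith

lemma HasDerivAt.secondDiff {g' : ℝ → ℝ} (h₀ : HasDerivAt g (g' x) x)
    (h₁ : HasDerivAt g (g' (x + 1)) (x + 1)) (h₂ : HasDerivAt g (g' (x + 2)) (x + 2)) :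
    HasDerivAt (secondDiff g) (secondDiff g' x) x :=
  ((h₂.comp_add_const x 2).sub ((h₁.comp_add_const x 1).const_mul 2)).add h₀

lemma convexOn_Ici_secondDiff {a : ℝ} {g' g'' : ℝ → ℝ} (hcont : ContinuousOn g (Ici a))
    (hg : ∀ x ∈ Ioi a, HasDerivAt g (g' x) x) (hg' : ∀ x ∈ Ioi a, HasDerivAt g' (g'' x) x)
    (hconv : ConvexOn ℝ (Ioi a) g'') :
    ConvexOn ℝ (Ici a) (secondDiff g) := by
  have shift (c : ℝ) (hc : 0 ≤ c) : ContinuousOn (fun x ↦ g (x + c)) (Ici a) :=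
    hcont.comp (continuousOn_id.add continuousOn_const)
      fun x (hx : a ≤ x) ↦ show a ≤ x + c by linarith
  have mem (x : ℝ) (hx : x ∈ Ioi a) (c : ℝ) (hc : 0 ≤ c) : x + c ∈ Ioi a :=
    show a < x + c by linarith [show a < x from hx]
  refine convexOn_of_hasDerivWithinAt2_nonneg (convex_Ici a) (f' := secondDiff g')
    (f'' := secondDiff g'') ?_ ?_ ?_ ?_
  · exact ((shift 2 (by norm_num)).sub (continuousOn_const.mul (shift 1 (by norm_num)))).add hcont
  all_goals rw [interior_Ici]; intro x hx
  · exact (HasDerivAt.secondDiff (hg x hx) (hg _ (mem x hx 1 (by norm_num)))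
      (hg _ (mem x hx 2 (by norm_num)))).hasDerivWithinAt
  · exact (HasDerivAt.secondDiff (hg' x hx) (hg' _ (mem x hx 1 (by norm_num)))
      (hg' _ (mem x hx 2 (by norm_num)))).hasDerivWithinAt
  · exact hconv.secondDiff_nonneg hx (mem x hx 2 (by norm_num))

end SecondDiff

section Rpow

variable {p x : ℝ}

lemma convexOn_Ioi_rpow_of_nonpos (hp : p ≤ 0) : ConvexOn ℝ (Ioi 0) fun x : ℝ ↦ x ^ p := by
  refine convexOn_of_hasDerivWithinAt2_nonneg (convex_Ioi 0)
    (f' := fun x ↦ p * x ^ (p - 1)) (f'' := fun x ↦ p * ((p - 1) * x ^ (p - 1 - 1))) ?_ ?_ ?_ ?_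
  · exact fun x hx ↦ (Real.continuousAt_rpow_const x p (Or.inl (ne_of_gt hx))).continuousWithinAt
  all_goals rw [interior_Ioi]; intro x (hx : 0 < x)
  · exact (Real.hasDerivAt_rpow_const (Or.inl hx.ne')).hasDerivWithinAt
  · exact ((Real.hasDerivAt_rpow_const (Or.inl hx.ne')).const_mul p).hasDerivWithinAt
  · rw [← mul_assoc]
    exact mul_nonneg (mul_nonneg_of_nonpos_of_nonpos hp (by linarith)) (Real.rpow_nonneg hx.le _)

lemma convexOn_Ici_secondDiff_rpow (hp₁ : 1 ≤ p) (hp₂ : p ≤ 2) :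
    ConvexOn ℝ (Ici 0) (secondDiff (· ^ p)) := by
  refine convexOn_Ici_secondDiff (g' := fun x ↦ p * x ^ (p - 1))
    (g'' := fun x ↦ p * ((p - 1) * x ^ (p - 1 - 1)))
    (Real.continuous_rpow_const (by linarith)).continuousOn
    (fun x hx ↦ Real.hasDerivAt_rpow_const (Or.inl (ne_of_gt hx)))
    (fun x hx ↦ (Real.hasDerivAt_rpow_const (Or.inl (ne_of_gt hx))).const_mul p) ?_
  refine ((convexOn_Ioi_rpow_of_nonpos (p := p - 1 - 1) (by linarith)).smul
    (by nlinarith : 0 ≤ p * (p - 1))).congr fun x _ ↦ smul_eq_mul .. |>.trans (mul_assoc ..)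

lemma secondDiff_rpow_nonneg (hp : 1 ≤ p) (hx : 0 ≤ x) : 0 ≤ secondDiff (· ^ p) x :=
  (convexOn_rpow hp).secondDiff_nonneg hx (show 0 ≤ x + 2 by linarith)

lemma secondDiff_rpow_le (hp₁ : 1 ≤ p) (hp₂ : p ≤ 2) (hx : 0 < x) :
    secondDiff (· ^ p) x ≤ 2 * p * (p - 1) * x ^ (p - 2) := by
  have hx2 : 0 < x + 2 := by linarith
  have hslope := (Real.concaveOn_rpow (p := p - 1) (by linarith) (by linarith))
    |>.slope_le_of_hasDerivAt hx.le hx2.le (by linarith)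
      (Real.hasDerivAt_rpow_const (Or.inl hx.ne'))
  rw [slope_def_field, add_sub_cancel_left, div_le_iff₀ two_pos,
    show p - 1 - 1 = p - 2 by ring] at hslope
  calc secondDiff (· ^ p) x ≤ p * (x + 2) ^ (p - 1) - p * x ^ (p - 1) :=
        (convexOn_rpow hp₁).secondDiff_le hx.le hx2.le
          (Real.hasDerivAt_rpow_const (Or.inl hx.ne'))
          (Real.hasDerivAt_rpow_const (Or.inl hx2.ne'))
    _ = p * ((x + 2) ^ (p - 1) - x ^ (p - 1)) := by ring
    _ ≤ p * ((p - 1) * x ^ (p - 2) * 2) := by gcongr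
    _ = 2 * p * (p - 1) * x ^ (p - 2) := by ring

lemma tendsto_secondDiff_rpow_atTop (hp₁ : 1 ≤ p) (hp₂ : p < 2) :
    Tendsto (secondDiff (· ^ p)) atTop (𝓝 0) := by
  have hdecay : Tendsto (fun x : ℝ ↦ 2 * p * (p - 1) * x ^ (p - 2)) atTop (𝓝 0) := by
    simpa using
      (tendsto_rpow_neg_atTop (y := 2 - p) (by linarith)).const_mul (2 * p * (p - 1))
  exact squeeze_zero' ((eventually_ge_atTop 0).mono fun x hx ↦ secondDiff_rpow_nonneg hp₁ hx)
    ((eventually_gt_atTop 0).mono fun x hx ↦ secondDiff_rpow_le hp₁ hp₂.le hx) hdecay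

end Rpow

lemma Q_add_three (α : ℝ) (n : ℕ) :
    Q α (n + 3) = secondDiff (secondDiff (· ^ (3 - α))) n := by
  simp only [Q, secondDiff]
  ring_nf

lemma sum_range_three_Q {α : ℝ} (hα : α < 3) :
    ∑ i ∈ Finset.range 3, Q α i =
      secondDiff (· ^ (3 - α)) 1 - secondDiff (· ^ (3 - α)) 0 := by
  simp only [Finset.sum_range_succ, Finset.sum_range_zero, Q, secondDiff]
  norm_num [Real.zero_rpow (show 3 - α ≠ 0 by linarith)]
  ring

theorem q_total_sum (α : ℝ) (h1 : 1 < α) (h2 : α < 2) :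
    HasSum (Q α) 0 := by
  set D := secondDiff (· ^ (3 - α))
  set G : ℕ → ℝ := fun k ↦ D (k + 1) - D k
  have hQ (n : ℕ) : Q α (n + 3) = G (n + 1) - G n := by
    rw [Q_add_three]
    simp only [G, D, secondDiff]
    push_cast
    ring_nf
  have hQ_nonneg (n : ℕ) : 0 ≤ Q α (n + 3) := by
    rw [Q_add_three]
    exact (convexOn_Ici_secondDiff_rpow (by linarith) (by linarith)).secondDiff_nonneg
      (mem_Ici.2 (Nat.cast_nonneg n)) (mem_Ici.2 (by positivity))
  have hG : Tendsto G atTop (𝓝 0) := by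
    have hD := (tendsto_secondDiff_rpow_atTop (p := 3 - α) (by linarith) (by linarith)).comp
      tendsto_natCast_atTop_atTop
    simpa using (hD.comp (tendsto_add_atTop_nat 1)).sub hD
  have htail : HasSum (fun n ↦ Q α (n + 3)) (0 - G 0) := by
    rw [hasSum_iff_tendsto_nat_of_nonneg hQ_nonneg]
    simp only [hQ, Finset.sum_range_sub]
    exact hG.sub_const _
  rw [← hasSum_nat_add_iff' 3, sum_range_three_Q (by linarith)]
  simpa [G] using htail
end

section
/- For $1<\alpha<2$, the series $\sum_{m=2}^{\infty} |q_m|$ with $q_m = (m+2)^{3-\alpha} - 4(m+1)^{3-\alpha} + 6 m^{3-\alpha} - 4(m-1)^{3-\alpha} + (m-2)^{3-\alpha}$ converges; consequently, for any bounded sequence $(u_m)_{m \geq -1}$ of reals, the series $\sum_{m=-1}^{\infty} q_m u_m$ converges absolutely. -/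
open Set Polynomial
open scoped fwdDiff

theorem HasDerivAt.fwdDiff {𝕜 F : Type*} [NontriviallyNormedField 𝕜] [NormedAddCommGroup F]
    [NormedSpace 𝕜 F] {f f' : 𝕜 → F} {x h : 𝕜} (hx : HasDerivAt f (f' x) x)
    (hxh : HasDerivAt f (f' (x + h)) (x + h)) : HasDerivAt (Δ_[h] f) (Δ_[h] f' x) x :=
  (hxh.comp_add_const x h).sub hx

theorem exists_sub_eq_mul_of_hasDerivAt {f f' : ℝ → ℝ} {a x h : ℝ}
    (hf : ∀ y > a, HasDerivAt f (f' y) y) (hx : a < x) (hh : 0 < h) :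
    ∃ ξ ∈ Ioo x (x + h), f (x + h) - f x = h * f' ξ := by
  obtain ⟨ξ, hξ, hslope⟩ := exists_hasDerivAt_eq_slope f f' (lt_add_of_pos_right x hh)
    (fun y hy => (hf y (hx.trans_le hy.1)).continuousAt.continuousWithinAt)
    (fun y hy => hf y (hx.trans hy.1))
  refine ⟨ξ, hξ, ?_⟩
  rw [hslope, add_sub_cancel_left, mul_div_cancel₀ _ hh.ne']

theorem exists_fwdDiff_iter_eq_mul {a h : ℝ} (hh : 0 < h) (n : ℕ) :
    ∀ f : ℕ → ℝ → ℝ, (∀ k, ∀ y > a, HasDerivAt (f k) (f (k + 1) y) y) → ∀ x > a,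
      ∃ ξ ∈ Icc x (x + n * h), Δ_[h] ^[n] (f 0) x = h ^ n * f n ξ := by
  induction n with
  | zero => exact fun f _ x _ => ⟨x, by simp, by simp⟩
  | succ n ih =>
    intro f hf x hx
    -- The differenced family `Δ_[h] (f k)` again satisfies the hypothesis on `(a, ∞)`.
    obtain ⟨ξ, hξ, hξeq⟩ := ih (fun k => Δ_[h] (f k))
      (fun k y hy => (hf k y hy).fwdDiff (hf k (y + h) (by linarith))) x hx
    obtain ⟨η, hη, hηeq⟩ := exists_sub_eq_mul_of_hasDerivAt (hf n) (hx.trans_le hξ.1) hh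
    refine ⟨η, ⟨hξ.1.trans hη.1.le, ?_⟩, ?_⟩
    · push_cast
      linarith [hξ.2, hη.2]
    · rw [Function.iterate_succ_apply, hξeq, fwdDiff, hηeq]
      ring

theorem hasDerivAt_descPochhammer_eval_mul_rpow (s : ℝ) (k : ℕ) {y : ℝ} (hy : 0 < y) :
    HasDerivAt (fun x => (descPochhammer ℝ k).eval s * x ^ (s - k))
      ((descPochhammer ℝ (k + 1)).eval s * y ^ (s - (k + 1 : ℕ))) y := by
  refine ((Real.hasDerivAt_rpow_const (p := s - k) (Or.inl hy.ne')).const_mul _).congr_deriv ?_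
  rw [descPochhammer_succ_eval]
  push_cast
  ring_nf

theorem abs_fwdDiff_iter_rpow_le {s x : ℝ} {n : ℕ} (hs : s ≤ n) (hx : 0 < x) :
    |Δ_[1] ^[n] (· ^ s) x| ≤ |(descPochhammer ℝ n).eval s| * x ^ (s - n) := by
  obtain ⟨ξ, hξ, hξeq⟩ := exists_fwdDiff_iter_eq_mul one_pos n
    (fun k y => (descPochhammer ℝ k).eval s * y ^ (s - k))
    (fun k y hy => hasDerivAt_descPochhammer_eval_mul_rpow s k hy) x hx
  have hΔ : Δ_[1] ^[n] (· ^ s) x = (descPochhammer ℝ n).eval s * ξ ^ (s - n) := by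
    simpa using hξeq
  rw [hΔ, abs_mul, abs_of_nonneg (Real.rpow_nonneg (hx.le.trans hξ.1) _)]
  exact mul_le_mul_of_nonneg_left (Real.rpow_le_rpow_of_nonpos hx hξ.1 (by linarith))
    (abs_nonneg _)

theorem summable_abs_fwdDiff_iter_rpow {s : ℝ} {n : ℕ} (hs : s < n - 1) :
    Summable fun m : ℕ => |Δ_[1] ^[n] (· ^ s) (m : ℝ)| := by
  rw [← summable_nat_add_iff 1]
  have hdecay : Summable fun m : ℕ => ((m + 1 : ℕ) : ℝ) ^ (s - n) :=
    (summable_nat_add_iff 1).mpr (Real.summable_nat_rpow.mpr (by linarith))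
  exact (hdecay.mul_left _).of_nonneg_of_le (fun _ => abs_nonneg _)
    fun m => abs_fwdDiff_iter_rpow_le (by linarith) (by positivity)

theorem fwdDiff_iter_four_apply (f : ℝ → ℝ) (x : ℝ) :
    Δ_[1] ^[4] f x = f (x + 4) - 4 * f (x + 3) + 6 * f (x + 2) - 4 * f (x + 1) + f x := by
  simp only [Function.iterate_succ_apply', Function.iterate_zero_apply, fwdDiff]
  ring_nf

theorem q_abs_summable_general (α : ℝ) (h1 : 1 < α) :
    Summable (fun m : ℕ =>
      |((m : ℝ) + 2 + 2) ^ (3 - α) - 4 * ((m : ℝ) + 2 + 1) ^ (3 - α)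
        + 6 * ((m : ℝ) + 2) ^ (3 - α) - 4 * ((m : ℝ) + 2 - 1) ^ (3 - α)
        + ((m : ℝ) + 2 - 2) ^ (3 - α)|) ∧
    ∀ u : ℕ → ℝ, (∃ C : ℝ, ∀ n, |u n| ≤ C) →
      Summable (fun n : ℕ => |Q α n * u n|) := by
  have hq : ∀ m : ℕ, Q α (m + 3) = Δ_[1] ^[4] (· ^ (3 - α)) (m : ℝ) := by
    intro m
    rw [fwdDiff_iter_four_apply, Q]
    ring_nf
  have hq_summable : Summable fun m : ℕ => |Q α (m + 3)| := by
    simpa only [← hq] using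
      summable_abs_fwdDiff_iter_rpow (s := 3 - α) (n := 4) (by push_cast; linarith)
  refine ⟨by simpa only [Q] using hq_summable, fun u ⟨C, hC⟩ => ?_⟩
  have hQ_summable : Summable fun n => |Q α n| :=
    (summable_nat_add_iff (f := fun n => |Q α n|) 3).mp hq_summable
  refine (hQ_summable.mul_right C).of_nonneg_of_le (fun _ => abs_nonneg _) fun n => ?_
  rw [abs_mul]
  exact mul_le_mul_of_nonneg_left (hC n) (abs_nonneg _)

theorem q_abs_summable (α : ℝ) (h1 : 1 < α) (h2 : α < 2) :
    Summable (fun m : ℕ =>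
      |((m : ℝ) + 2 + 2) ^ (3 - α) - 4 * ((m : ℝ) + 2 + 1) ^ (3 - α)
        + 6 * ((m : ℝ) + 2) ^ (3 - α) - 4 * ((m : ℝ) + 2 - 1) ^ (3 - α)
        + ((m : ℝ) + 2 - 2) ^ (3 - α)|) ∧
    ∀ u : ℕ → ℝ, (∃ C : ℝ, ∀ n, |u n| ≤ C) →
      Summable (fun n : ℕ => |Q α n * u n|) :=
  q_abs_summable_general α h1
end
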